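/- arXiv:1812.03712 — 3 statements merged into one kernel-verified Lean document; each statement's English description precedes it below -/
import Mathlib

section
/- Let (Y, d_Y, m_Y) be a metric measure space and let x be a point in the support of m_Y satisfying the exponential volume growth condition m_Y(B_R(x))/m_Y(B_1(x)) ≤ c₀·exp(c₁·R) for all R ≥ 1, for some constants c₀, c₁ > 0. Then for every δ > 0 there exists L₀ = L₀(δ, c₀, c₁) > 1 such that ∫_{Y \ B_{L₀}(x)} m_Y(B_1(y)) · exp(−2·d_Y(x,y)²/5) dm_Y(y) ≤ δ · (m_Y(B_1(x)))². -/
open MeasureTheory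

/-- Lemma 2.2(1): exponential volume growth implies a Gaussian-tail concentration
estimate outside a large ball, with `L₀` depending only on `δ, c₀, c₁`. -/
theorem stmt0 (c₀ c₁ δ : ℝ) (hc₀ : 0 < c₀) (hc₁ : 0 < c₁) (hδ : 0 < δ) :
    ∃ L₀ : ℝ, 1 < L₀ ∧
      ∀ (Y : Type) [MetricSpace Y] [MeasurableSpace Y] [BorelSpace Y]
        [CompleteSpace Y] [TopologicalSpace.SeparableSpace Y]
        (μ : Measure Y) (x : Y),
        (∀ s : Set Y, Bornology.IsBounded s → μ s < ⊤) →
        (∀ r : ℝ, 0 < r → 0 < μ (Metric.ball x r)) →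
        (∀ R : ℝ, 1 ≤ R →
          μ (Metric.ball x R) ≤ ENNReal.ofReal (c₀ * Real.exp (c₁ * R)) * μ (Metric.ball x 1)) →
        ∫⁻ y in (Metric.ball x L₀)ᶜ,
            μ (Metric.ball y 1) * ENNReal.ofReal (Real.exp (-(2 * dist x y ^ 2) / 5)) ∂μ
          ≤ ENNReal.ofReal δ * μ (Metric.ball x 1) ^ 2 := by
  set r : ℝ := Real.exp (-(1/5)) with hr_def
  have hr_pos : 0 < r := Real.exp_pos _
  have hr_lt : r < 1 := by
    rw [hr_def, Real.exp_lt_one_iff]; norm_num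
  have h1r : 0 < 1 - r := by linarith
  set A : ℝ := c₀ ^ 2 / ((1 - r) * δ) with hA_def
  have hA_pos : 0 < A := by positivity
  set L₀ : ℝ := max 2 (max (25 * c₁) (5 * Real.log A + 1)) with hL₀_def
  have hL₀2 : 2 ≤ L₀ := le_max_left _ _
  have hL₀c : 25 * c₁ ≤ L₀ := le_trans (le_max_left _ _) (le_max_right _ _)
  have hL₀log : 5 * Real.log A + 1 ≤ L₀ := le_trans (le_max_right _ _) (le_max_right _ _)
  have hL₀1 : (1:ℝ) < L₀ := by linarith
  refine ⟨L₀, hL₀1, ?_⟩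
  intro Y _ _ _ _ _ μ x hfin hpos hgrow
  -- the annuli
  set Ann : ℕ → Set Y := fun n => Metric.ball x (L₀ + n + 1) \ Metric.ball x (L₀ + n) with hAnn
  have hmeas : ∀ n, MeasurableSet (Ann n) :=
    fun n => measurableSet_ball.diff measurableSet_ball
  have hmem : ∀ n (y : Y), y ∈ Ann n ↔ L₀ + n ≤ dist y x ∧ dist y x < L₀ + n + 1 := by
    intro n y
    simp [hAnn, Metric.mem_ball, not_lt, and_comm]
  have hdisj : Pairwise (Function.onFun Disjoint Ann) := by
    intro n m hnm
    simp only [Function.onFun, Set.disjoint_left]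
    intro y hyn hym
    rw [hmem] at hyn hym
    have h1 : (n:ℝ) < m + 1 := by linarith [hyn.1, hym.2]
    have h2 : (m:ℝ) < n + 1 := by linarith [hym.1, hyn.2]
    have h1' : n < m + 1 := by exact_mod_cast h1
    have h2' : m < n + 1 := by exact_mod_cast h2
    omega
  have hcover : (Metric.ball x L₀)ᶜ = ⋃ n, Ann n := by
    ext y
    simp only [Set.mem_compl_iff, Metric.mem_ball, not_lt, Set.mem_iUnion]
    constructor
    · intro hy
      refine ⟨⌊dist y x - L₀⌋₊, ?_⟩
      rw [hmem]
      have h0 : (0:ℝ) ≤ dist y x - L₀ := by linarith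
      constructor
      · have := Nat.floor_le h0
        linarith
      · have := Nat.lt_floor_add_one (dist y x - L₀)
        linarith
    · rintro ⟨n, hn⟩
      rw [hmem] at hn
      have : (0:ℝ) ≤ (n:ℝ) := Nat.cast_nonneg n
      linarith [hn.1]
  -- per-annulus bound
  set M := μ (Metric.ball x 1) with hM
  have hterm : ∀ n : ℕ,
      ∫⁻ y in Ann n, μ (Metric.ball y 1) *
          ENNReal.ofReal (Real.exp (-(2 * dist x y ^ 2) / 5)) ∂μ
        ≤ ENNReal.ofReal (c₀ ^ 2 * Real.exp (-L₀ / 5) * r ^ n) * M ^ 2 := by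
    intro n
    have hn0 : (0:ℝ) ≤ (n:ℝ) := Nat.cast_nonneg n
    set t : ℝ := L₀ + n with ht
    have ht1 : (1:ℝ) ≤ t := by simp only [ht]; linarith
    have htL : L₀ ≤ t := by simp only [ht]; linarith
    -- pointwise bound on the annulus
    have hpt : ∀ y ∈ Ann n,
        μ (Metric.ball y 1) * ENNReal.ofReal (Real.exp (-(2 * dist x y ^ 2) / 5))
          ≤ ENNReal.ofReal (c₀ * Real.exp (c₁ * (t + 2)) * Real.exp (-(2 * t ^ 2) / 5)) * M := by
      intro y hy
      rw [hmem] at hy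
      obtain ⟨hy1, hy2⟩ := hy
      have hball : Metric.ball y 1 ⊆ Metric.ball x (t + 2) := by
        apply Metric.ball_subset_ball'
        simp only [ht]; linarith
      have hμ1 : μ (Metric.ball y 1) ≤ ENNReal.ofReal (c₀ * Real.exp (c₁ * (t + 2))) * M := by
        calc μ (Metric.ball y 1) ≤ μ (Metric.ball x (t + 2)) := measure_mono hball
          _ ≤ _ := hgrow (t + 2) (by linarith)
      have hexp : Real.exp (-(2 * dist x y ^ 2) / 5) ≤ Real.exp (-(2 * t ^ 2) / 5) := by
        apply Real.exp_le_exp.2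
        have hd : t ≤ dist x y := by rw [dist_comm]; exact hy1
        have ht0 : (0:ℝ) ≤ t := by linarith
        nlinarith
      calc μ (Metric.ball y 1) * ENNReal.ofReal (Real.exp (-(2 * dist x y ^ 2) / 5))
          ≤ (ENNReal.ofReal (c₀ * Real.exp (c₁ * (t + 2))) * M) *
              ENNReal.ofReal (Real.exp (-(2 * t ^ 2) / 5)) :=
            mul_le_mul' hμ1 (ENNReal.ofReal_le_ofReal hexp)
        _ = ENNReal.ofReal (c₀ * Real.exp (c₁ * (t + 2)) * Real.exp (-(2 * t ^ 2) / 5)) * M := by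
            rw [ENNReal.ofReal_mul (by positivity), mul_right_comm,
              ← ENNReal.ofReal_mul (by positivity), ← ENNReal.ofReal_mul (by positivity)]
    have hμAnn : μ (Ann n) ≤ ENNReal.ofReal (c₀ * Real.exp (c₁ * (t + 1))) * M := by
      calc μ (Ann n) ≤ μ (Metric.ball x (t + 1)) := by
            apply measure_mono
            intro y hy
            rw [hmem] at hy
            exact Metric.mem_ball.2 hy.2
        _ ≤ _ := hgrow (t + 1) (by linarith)
    -- the key real inequality
    have hkey : c₀ * Real.exp (c₁ * (t + 2)) * Real.exp (-(2 * t ^ 2) / 5) *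
        (c₀ * Real.exp (c₁ * (t + 1))) ≤ c₀ ^ 2 * Real.exp (-L₀ / 5) * r ^ n := by
      have hrw : c₀ * Real.exp (c₁ * (t + 2)) * Real.exp (-(2 * t ^ 2) / 5) *
          (c₀ * Real.exp (c₁ * (t + 1)))
          = c₀ ^ 2 * Real.exp (c₁ * (t + 2) + c₁ * (t + 1) + -(2 * t ^ 2) / 5) := by
        rw [Real.exp_add, Real.exp_add]; ring
      have hrw2 : c₀ ^ 2 * Real.exp (-L₀ / 5) * r ^ n
          = c₀ ^ 2 * Real.exp (-t / 5) := by
        rw [hr_def, ← Real.exp_nat_mul, mul_assoc, ← Real.exp_add]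
        congr 1
        simp only [ht]; ring
      rw [hrw, hrw2]
      have hexp : c₁ * (t + 2) + c₁ * (t + 1) + -(2 * t ^ 2) / 5 ≤ -t / 5 := by
        have h25 : 25 * c₁ ≤ t := le_trans hL₀c htL
        nlinarith [mul_le_mul_of_nonneg_left h25 (le_of_lt (lt_of_lt_of_le one_pos ht1)),
          sq_nonneg (t - 1)]
      exact mul_le_mul_of_nonneg_left (Real.exp_le_exp.2 hexp) (by positivity)
    calc ∫⁻ y in Ann n, μ (Metric.ball y 1) *
            ENNReal.ofReal (Real.exp (-(2 * dist x y ^ 2) / 5)) ∂μ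
        ≤ ∫⁻ _ in Ann n,
            ENNReal.ofReal (c₀ * Real.exp (c₁ * (t + 2)) * Real.exp (-(2 * t ^ 2) / 5)) * M ∂μ :=
          setLIntegral_mono' (hmeas n) hpt
      _ = ENNReal.ofReal (c₀ * Real.exp (c₁ * (t + 2)) * Real.exp (-(2 * t ^ 2) / 5)) * M *
            μ (Ann n) := setLIntegral_const _ _
      _ ≤ ENNReal.ofReal (c₀ * Real.exp (c₁ * (t + 2)) * Real.exp (-(2 * t ^ 2) / 5)) * M *
            (ENNReal.ofReal (c₀ * Real.exp (c₁ * (t + 1))) * M) :=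
          mul_le_mul_right hμAnn _
      _ = ENNReal.ofReal (c₀ * Real.exp (c₁ * (t + 2)) * Real.exp (-(2 * t ^ 2) / 5)) *
            ENNReal.ofReal (c₀ * Real.exp (c₁ * (t + 1))) * M ^ 2 := by ring
      _ = ENNReal.ofReal (c₀ * Real.exp (c₁ * (t + 2)) * Real.exp (-(2 * t ^ 2) / 5) *
            (c₀ * Real.exp (c₁ * (t + 1)))) * M ^ 2 := by
          rw [← ENNReal.ofReal_mul (by positivity)]
      _ ≤ ENNReal.ofReal (c₀ ^ 2 * Real.exp (-L₀ / 5) * r ^ n) * M ^ 2 :=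
          mul_le_mul_left (ENNReal.ofReal_le_ofReal hkey) _
  -- sum up
  have hsum : ∑' n : ℕ, ENNReal.ofReal (c₀ ^ 2 * Real.exp (-L₀ / 5) * r ^ n) * M ^ 2
      ≤ ENNReal.ofReal δ * M ^ 2 := by
    rw [ENNReal.tsum_mul_right]
    apply mul_le_mul_left
    have heq : ∀ n : ℕ, ENNReal.ofReal (c₀ ^ 2 * Real.exp (-L₀ / 5) * r ^ n)
        = ENNReal.ofReal (c₀ ^ 2 * Real.exp (-L₀ / 5)) * ENNReal.ofReal r ^ n := by
      intro n
      rw [ENNReal.ofReal_mul (by positivity), ENNReal.ofReal_pow hr_pos.le]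
    simp_rw [heq]
    rw [ENNReal.tsum_mul_left, ENNReal.tsum_geometric]
    have h1 : (1 : ENNReal) - ENNReal.ofReal r = ENNReal.ofReal (1 - r) := by
      rw [ENNReal.ofReal_sub 1 hr_pos.le, ENNReal.ofReal_one]
    rw [h1, ← ENNReal.ofReal_inv_of_pos h1r, ← ENNReal.ofReal_mul (by positivity)]
    apply ENNReal.ofReal_le_ofReal
    rw [mul_inv_le_iff₀ h1r]
    -- need : c₀ ^ 2 * exp (-L₀/5) ≤ δ * (1 - r)
    have hlogA : Real.log A ≤ (L₀ - 1) / 5 := by linarith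
    have h5 : -L₀ / 5 ≤ -Real.log A := by linarith
    calc c₀ ^ 2 * Real.exp (-L₀ / 5) ≤ c₀ ^ 2 * Real.exp (-Real.log A) := by
          apply mul_le_mul_of_nonneg_left (Real.exp_le_exp.2 h5) (by positivity)
      _ = c₀ ^ 2 * A⁻¹ := by rw [Real.exp_neg, Real.exp_log hA_pos]
      _ = (1 - r) * δ := by
          rw [hA_def]
          field_simp
      _ = δ * (1 - r) := by ring
  calc ∫⁻ y in (Metric.ball x L₀)ᶜ,
        μ (Metric.ball y 1) * ENNReal.ofReal (Real.exp (-(2 * dist x y ^ 2) / 5)) ∂μ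
      = ∑' n : ℕ, ∫⁻ y in Ann n, μ (Metric.ball y 1) *
          ENNReal.ofReal (Real.exp (-(2 * dist x y ^ 2) / 5)) ∂μ := by
        rw [hcover, lintegral_iUnion hmeas hdisj]
    _ ≤ ∑' n : ℕ, ENNReal.ofReal (c₀ ^ 2 * Real.exp (-L₀ / 5) * r ^ n) * M ^ 2 :=
        ENNReal.tsum_le_tsum hterm
    _ ≤ ENNReal.ofReal δ * M ^ 2 := hsum
end

section
/- Let M be a compact metric measure space whose heat kernel p satisfies the two-sided Gaussian bounds: C₁^{−1}·m(B_{√s}(x))^{−1}·exp(−d(x,y)²/(3s) − C₂s) ≤ p(x,y,s) ≤ C₁·m(B_{√s}(x))^{−1}·exp(−d(x,y)²/(5s) + C₂s) for all x, y and s > 0, with C₁ > 1, C₂ > 0. If x₁, x₂ are points with p(x₁, x₁, s) = p(x₁, x₂, s) for all s > 0, then x₁ = x₂. -/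
open MeasureTheory

/-- If the heat kernel of a compact metric measure space with full support satisfies
two-sided Gaussian bounds and `p(x₁,x₁,s) = p(x₁,x₂,s)` for all `s > 0`, then `x₁ = x₂`. -/
theorem stmt5 {X : Type*} [MetricSpace X] [CompactSpace X] [MeasurableSpace X]
    (μ : Measure X) [IsFiniteMeasure μ]
    (hsupp : ∀ (x : X) (r : ℝ), 0 < r → 0 < μ (Metric.ball x r))
    (p : X → X → ℝ → ℝ) (C₁ C₂ : ℝ) (hC₁ : 1 < C₁) (hC₂ : 0 < C₂)
    (hlow : ∀ (x y : X) (s : ℝ), 0 < s →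
      C₁⁻¹ / (μ (Metric.ball x (Real.sqrt s))).toReal *
          Real.exp (-(dist x y) ^ 2 / (3 * s) - C₂ * s) ≤ p x y s)
    (hup : ∀ (x y : X) (s : ℝ), 0 < s →
      p x y s ≤ C₁ / (μ (Metric.ball x (Real.sqrt s))).toReal *
          Real.exp (-(dist x y) ^ 2 / (5 * s) + C₂ * s))
    (x₁ x₂ : X) (h : ∀ s : ℝ, 0 < s → p x₁ x₁ s = p x₁ x₂ s) :
    x₁ = x₂ := by
  by_contra hne
  set d : ℝ := dist x₁ x₂ with hd_def
  have hd : 0 < d := dist_pos.mpr hne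
  have hC₁pos : (0:ℝ) < C₁ := lt_trans one_pos hC₁
  set L : ℝ := Real.log C₁ with hL_def
  have hL : 0 < L := Real.log_pos hC₁
  set A : ℝ := 2 * L + 2 * C₂ with hA_def
  have hA : 0 < A := by positivity
  set s : ℝ := min 1 (d ^ 2 / (10 * A)) with hs_def
  have hs : 0 < s := lt_min one_pos (by positivity)
  have hs1 : s ≤ 1 := min_le_left _ _
  have hs2 : s ≤ d ^ 2 / (10 * A) := min_le_right _ _
  have hV : 0 < (μ (Metric.ball x₁ (Real.sqrt s))).toReal :=
    ENNReal.toReal_pos (hsupp x₁ _ (Real.sqrt_pos.mpr hs)).ne' (measure_ne_top μ _)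
  have h1 := hlow x₁ x₁ s hs
  have h2 := hup x₁ x₂ s hs
  rw [h s hs] at h1
  have e1 : -(dist x₁ x₁) ^ 2 / (3 * s) - C₂ * s = -(C₂ * s) := by
    simp [dist_self]
  rw [e1] at h1
  have key : C₁⁻¹ * Real.exp (-(C₂ * s)) ≤
      C₁ * Real.exp (-d ^ 2 / (5 * s) + C₂ * s) := by
    have hc := le_trans h1 h2
    rw [div_mul_eq_mul_div, div_mul_eq_mul_div] at hc
    exact (div_le_div_iff_of_pos_right hV).mp hc
  have key2 : Real.exp (-(C₂ * s)) ≤ C₁ ^ 2 * Real.exp (-d ^ 2 / (5 * s) + C₂ * s) := by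
    have := mul_le_mul_of_nonneg_left key hC₁pos.le
    rw [← mul_assoc, mul_inv_cancel₀ hC₁pos.ne', one_mul, ← mul_assoc] at this
    calc Real.exp (-(C₂ * s)) ≤ C₁ * C₁ * Real.exp (-d ^ 2 / (5 * s) + C₂ * s) := this
      _ = C₁ ^ 2 * Real.exp (-d ^ 2 / (5 * s) + C₂ * s) := by ring
  have key3 : -(C₂ * s) ≤ 2 * L + (-d ^ 2 / (5 * s) + C₂ * s) := by
    have : C₁ ^ 2 * Real.exp (-d ^ 2 / (5 * s) + C₂ * s) =
        Real.exp (2 * L + (-d ^ 2 / (5 * s) + C₂ * s)) := by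
      rw [sq, ← Real.exp_log hC₁pos, ← Real.exp_add, ← Real.exp_add, hL_def]
      ring_nf
    rw [this] at key2
    exact Real.exp_le_exp.mp key2
  have hCs : C₂ * s ≤ C₂ := by nlinarith
  have h5s : (0:ℝ) < 5 * s := by linarith
  clear_value s A L d
  have hbig : 2 * A ≤ d ^ 2 / (5 * s) := by
    rw [le_div_iff₀ h5s]
    calc 2 * A * (5 * s) ≤ 2 * A * (5 * (d ^ 2 / (10 * A))) := by
          apply mul_le_mul_of_nonneg_left _ (by linarith)
          linarith
      _ = d ^ 2 := by field_simp [hA.ne']; ring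
  rw [hA_def] at hbig
  rw [neg_div] at key3
  linarith
end

section
/- Consider the flat interval X = [0, π] with Euclidean distance and measure H¹/π, whoseNeumann Laplacian eigenfunctions are φ₀ ≡ 1 and φᵢ(s) = √2·cos(i s) with eigenvalues i². Then the heat-kernel pull-back metric is g_t = 2·Σ_{i≥1} e^{−2i²t}·i²·sin²(is) ds⊗ds, and for every t > 0 the coefficient function G_t(s) = 2·Σ_{i≥1} e^{−2i²t}·i²·sin²(is) is continuous, vanishes at s = 0 and s = π, and is strictly positive on (0, π). -/
lemma aux16_summable (t : ℝ) (ht : 0 < t) :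
    Summable (fun i : ℕ => Real.exp (-2 * ((i : ℝ) + 1) ^ 2 * t) * ((i : ℝ) + 1) ^ 2) := by
  have hr : ‖Real.exp (-2 * t)‖ < 1 := by
    rw [Real.norm_eq_abs, abs_of_pos (Real.exp_pos _)]
    exact Real.exp_lt_one_iff.mpr (by linarith)
  have h := (summable_pow_mul_geometric_of_norm_lt_one (R := ℝ) 2 hr).mul_left 1
  apply Summable.of_nonneg_of_le (fun i => by positivity) _
    ((summable_nat_add_iff 1).mpr h)
  intro i
  have h1 : (0:ℝ) < (i : ℝ) + 1 := by positivity
  have : Real.exp (-2 * ((i : ℝ) + 1) ^ 2 * t) ≤ Real.exp (-2 * t) ^ (i + 1) := by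
    rw [← Real.exp_nat_mul]
    apply Real.exp_le_exp.mpr
    have h2 : (1:ℝ) ≤ (i : ℝ) + 1 := by linarith [Nat.cast_nonneg (α := ℝ) i]
    have h3 : ((i:ℝ)+1) ≤ ((i:ℝ)+1)^2 := by nlinarith
    push_cast
    nlinarith [mul_le_mul_of_nonneg_right h3 (le_of_lt ht)]
  calc Real.exp (-2 * ((i : ℝ) + 1) ^ 2 * t) * ((i : ℝ) + 1) ^ 2
      ≤ Real.exp (-2 * t) ^ (i + 1) * ((i : ℝ) + 1) ^ 2 := by
        apply mul_le_mul_of_nonneg_right this (by positivity)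
    _ = 1 * ((((i:ℕ) + 1 : ℕ) : ℝ) ^ 2 * Real.exp (-2 * t) ^ (i + 1)) := by push_cast; ring

/-- For the interval `[0, π]` with Neumann eigenfunctions `φᵢ(s) = √2 cos(i s)`,
`λᵢ = i²`, the coefficient of the heat-kernel pull-back metric
`G_t(s) = 2 Σ_{i≥1} e^{−2i²t} i² sin²(i s)` is continuous, vanishes at `s = 0` and
`s = π`, and is strictly positive on `(0, π)`, for every `t > 0`. -/
theorem stmt16 (t : ℝ) (ht : 0 < t) :
    Continuous (fun s : ℝ =>
      2 * ∑' i : ℕ, Real.exp (-2 * ((i : ℝ) + 1) ^ 2 * t) * ((i : ℝ) + 1) ^ 2 *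
        Real.sin (((i : ℝ) + 1) * s) ^ 2) ∧
    (2 * ∑' i : ℕ, Real.exp (-2 * ((i : ℝ) + 1) ^ 2 * t) * ((i : ℝ) + 1) ^ 2 *
        Real.sin (((i : ℝ) + 1) * (0 : ℝ)) ^ 2 = 0) ∧
    (2 * ∑' i : ℕ, Real.exp (-2 * ((i : ℝ) + 1) ^ 2 * t) * ((i : ℝ) + 1) ^ 2 *
        Real.sin (((i : ℝ) + 1) * Real.pi) ^ 2 = 0) ∧
    ∀ s : ℝ, 0 < s → s < Real.pi →
      0 < 2 * ∑' i : ℕ, Real.exp (-2 * ((i : ℝ) + 1) ^ 2 * t) * ((i : ℝ) + 1) ^ 2 *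
        Real.sin (((i : ℝ) + 1) * s) ^ 2 := by
  have hM := aux16_summable t ht
  have hsum : ∀ s : ℝ, Summable (fun i : ℕ =>
      Real.exp (-2 * ((i : ℝ) + 1) ^ 2 * t) * ((i : ℝ) + 1) ^ 2 *
        Real.sin (((i : ℝ) + 1) * s) ^ 2) := by
    intro s
    apply Summable.of_nonneg_of_le (fun i => by positivity) _ hM
    intro i
    have : Real.sin (((i : ℝ) + 1) * s) ^ 2 ≤ 1 := by
      exact Real.sin_sq_le_one _
    calc _ ≤ Real.exp (-2 * ((i : ℝ) + 1) ^ 2 * t) * ((i : ℝ) + 1) ^ 2 * 1 :=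
          mul_le_mul_of_nonneg_left this (by positivity)
      _ = _ := mul_one _
  refine ⟨?_, ?_, ?_, ?_⟩
  · apply Continuous.mul continuous_const
    apply continuous_tsum (fun i => by fun_prop) hM
    intro i s
    rw [Real.norm_eq_abs, abs_of_nonneg (by positivity)]
    have : Real.sin (((i : ℝ) + 1) * s) ^ 2 ≤ 1 := by
      exact Real.sin_sq_le_one _
    calc _ ≤ Real.exp (-2 * ((i : ℝ) + 1) ^ 2 * t) * ((i : ℝ) + 1) ^ 2 * 1 :=
          mul_le_mul_of_nonneg_left this (by positivity)
      _ = _ := mul_one _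
  · simp
  · have : ∀ i : ℕ, Real.sin (((i : ℝ) + 1) * Real.pi) = 0 := by
      intro i
      have : ((i : ℝ) + 1) * Real.pi = (i + 1 : ℤ) * Real.pi := by push_cast; ring
      rw [this, Real.sin_int_mul_pi]
    simp [this]
  · intro s hs0 hsπ
    have hpos : 0 < ∑' i : ℕ, Real.exp (-2 * ((i : ℝ) + 1) ^ 2 * t) * ((i : ℝ) + 1) ^ 2 *
        Real.sin (((i : ℝ) + 1) * s) ^ 2 := by
      apply Summable.tsum_pos (hsum s) (fun i => by positivity) 0
      have : Real.sin s ≠ 0 := ne_of_gt (Real.sin_pos_of_pos_of_lt_pi hs0 hsπ)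
      simp only [Nat.cast_zero, zero_add, one_mul]
      positivity
    linarith
end
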